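/- arXiv:1302.4494 — 2 statements merged into one kernel-verified Lean document; each statement's English description precedes it below -/
import Mathlib

section
/- Let w = ((i_1,j_1),…,(i_t,j_t)) be a standard word of total length r, and let γ̲_w = (γ^{(1)},…,γ^{(m)}) and f_w = (f_1,…,f_m) be the data obtained by the block decomposition of w. Then: (a) each γ^{(a)} is a nonempty partition, so γ̲_w is a sincere multipartition of r; (b) f_w is weakly decreasing, i.e. f_1 ≥ f_2 ≥ … ≥ f_m; (c) γ̲_w is a Kleshchev multipartition relative to f_w* = (−f_m,…,−f_1), that is, γ^{(a)}_{j + f_{m−a} − f_{m−a+1}} ≤ γ^{(a+1)}_j for all j ≥ 1 and all 1 ≤ a ≤ m−1 (convention: γ_j = 0 for j exceeding the number of parts). -/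
/-- An integral segment: a pair `(i, j)` of integers (proper when `i ≤ j`). -/
abbrev Seg := ℤ × ℤ

/-- The length `j - i + 1` of a segment. -/
def segLen (s : Seg) : ℤ := s.2 - s.1 + 1

/-- A standard word of total length `r`: a nonempty sequence of integral segments whose
upper endpoints weakly increase, such that lower endpoints weakly decrease on ties,
of total length `r`. -/
def IsStandardWord (r : ℕ) (w : List Seg) : Prop :=
  w ≠ [] ∧ (∀ s ∈ w, s.1 ≤ s.2) ∧
  w.Chain' (fun p q => p.2 ≤ q.2 ∧ (p.2 = q.2 → q.1 ≤ p.1)) ∧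
  (w.map segLen).sum = (r : ℤ)

/-- Number of further segments continuing the chain started at `p`:
consecutive upper endpoints increase by exactly 1 and lower endpoints strictly increase. -/
def chainLen : Seg → List Seg → ℕ
  | _, [] => 0
  | p, q :: rest => if q.2 = p.2 + 1 ∧ p.1 < q.1 then chainLen q rest + 1 else 0

/-- The block decomposition of a word into maximal chains. -/
def blocks : List Seg → List (List Seg)
  | [] => []
  | p :: rest =>
      (p :: rest.take (chainLen p rest)) :: blocks (rest.drop (chainLen p rest))
termination_by w => w.length
decreasing_by
  simp only [List.length_drop, List.length_cons]
  omega

/-- `γ̲_w`: the multipartition attached to a word by the block decomposition. -/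
def gammaOf (w : List Seg) : List (List ℕ) :=
  (blocks w).map (fun b => b.map (fun s => (segLen s).toNat))

/-- `f_w`: the tuple of upper endpoints of the first segments of the blocks,
in reversed block order (so `f_m = j_1`). -/
def fOf (w : List Seg) : List ℤ :=
  ((blocks w).map (fun b => (b.headI).2)).reverse

/-- A partition: a weakly decreasing list of positive integers. -/
def IsPartition (p : List ℕ) : Prop := p.Pairwise (· ≥ ·) ∧ ∀ x ∈ p, 0 < x

/-- The `j`-th part of a partition (1-based), with the convention `p_j = 0` for `j > ℓ(p)`. -/
def part (p : List ℕ) (j : ℕ) : ℕ := p.getD (j - 1) 0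

/-- The `a`-th entry of an integer tuple (1-based). -/
def fpart (f : List ℤ) (a : ℕ) : ℤ := f.getD (a - 1) 0

/-- The `a`-th component of a multipartition (1-based). -/
def mpart (γ : List (List ℕ)) (a : ℕ) : List ℕ := γ.getD (a - 1) []

/-- A multipartition of `r`: a tuple of partitions of total size `r`. -/
def IsMultipartition (r : ℕ) (γ : List (List ℕ)) : Prop :=
  (∀ p ∈ γ, IsPartition p) ∧ (γ.map List.sum).sum = r

/-- `f* = (−f_m, …, −f_1)`. -/
def fstar (f : List ℤ) : List ℤ := (f.map (fun x => -x)).reverse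

/-- Kleshchev multipartition relative to a weakly decreasing integer tuple `g`:
`γ^{(k)}_{j + g_k − g_{k+1}} ≤ γ^{(k+1)}_j` for all `j ≥ 1` and `1 ≤ k ≤ m−1`. -/
def IsKleshchev (g : List ℤ) (γ : List (List ℕ)) : Prop :=
  ∀ k j, 1 ≤ k → k ≤ g.length - 1 → 1 ≤ j →
    part (mpart γ k) (j + (fpart g k - fpart g (k + 1)).toNat) ≤ part (mpart γ (k + 1)) j

/-- Standard Kleshchev multipartition of `r` relative to `f`: conditions (SK1)–(SK3). -/
def IsStandardKleshchev (r : ℕ) (f : List ℤ) (γ : List (List ℕ)) : Prop :=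
  γ.length = f.length ∧
  IsMultipartition r γ ∧
  (∀ a, 1 ≤ a → a ≤ γ.length → mpart γ a ≠ []) ∧
  (∀ a, 1 ≤ a → a ≤ f.length - 1 →
    ((mpart γ a).length : ℤ) ≤ (fpart f a - fpart f (a + 1)) + 1 ∧
    part (mpart γ a) ((fpart f a - fpart f (a + 1)).toNat + 1) ≤ part (mpart γ (a + 1)) 1) ∧
  (∀ a, 1 ≤ a → a ≤ f.length - 1 →
    ((mpart γ a).length : ℤ) = fpart f a - fpart f (a + 1) →
    (part (mpart γ a) ((fpart f a - fpart f (a + 1)).toNat) : ℤ) ≤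
      (part (mpart γ (a + 1)) 1 : ℤ) - 1)

/-- `λ′_j = #{a : λ_a ≥ j}`. -/
def conjCount (p : List ℕ) (j : ℕ) : ℕ := (p.filter (fun x => j ≤ x)).length

/-- The conjugate partition, as a list of length `λ_1`. -/
def conjList (p : List ℕ) : List ℕ := (List.range p.headI).map (fun j0 => conjCount p (j0 + 1))

/-- `λ̲′ = (λ^{(m)′}, …, λ^{(1)′})`. -/
def conjMulti (γ : List (List ℕ)) : List (List ℕ) := (γ.map conjList).reverse

/-- Column residual segments of a single partition with parameter `fk`:
the `j`-th one is `(f_k + j − λ′_j, f_k + j − 1)`, for `j = 1, …, λ_1`. -/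
def colSegs (fk : ℤ) (p : List ℕ) : List Seg :=
  (List.range p.headI).map (fun (j0 : ℕ) =>
    (fk + (j0 : ℤ) + 1 - (conjCount p (j0 + 1) : ℤ), fk + (j0 : ℤ)))

/-- Column reading `s^c_{λ̲;f}`: components `k = m, …, 1`, columns `j = 1, …, λ^{(k)}_1`. -/
def colReading (f : List ℤ) (lam : List (List ℕ)) : List Seg :=
  (((lam.zip f).reverse).map (fun pk => colSegs pk.2 pk.1)).flatten

/-- Row residual segments of a single partition with parameter `fk`:
the `i`-th one is `(f_k + 1 − i, f_k + λ_i − i)`, for `i = 1, …, ℓ(λ)`. -/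
def rowSegs (fk : ℤ) (p : List ℕ) : List Seg :=
  (List.range p.length).map (fun (i0 : ℕ) =>
    (fk - (i0 : ℤ), fk + ((p.getD i0 0 : ℕ) : ℤ) - (i0 : ℤ) - 1))

/-- Row reading `s^r_{λ̲;f}`: components `k = 1, …, m`, rows `i = 1, …, ℓ(λ^{(k)})`. -/
def rowReading (f : List ℤ) (lam : List (List ℕ)) : List Seg :=
  ((lam.zip f).map (fun pk => rowSegs pk.2 pk.1)).flatten

/-- The inverse of a segment: `(i, j) ↦ (−j, −i)`. -/
def segInv (s : Seg) : Seg := (-s.2, -s.1)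

/-- The word attached to a tuple `f` and a multipartition `γ`:
for each `a = 1, …, m` and `b = 1, …, ℓ(γ^{(a)})` the segment
`(f_{m−a+1} − γ^{(a)}_b + b, f_{m−a+1} + b − 1)`. -/
def wordOf (f : List ℤ) (γ : List (List ℕ)) : List Seg :=
  ((List.range γ.length).map (fun a0 =>
    (List.range (γ.getD a0 []).length).map (fun b0 =>
      (f.getD (f.length - 1 - a0) 0 - ((γ.getD a0 []).getD b0 0 : ℤ) + (b0 + 1 : ℤ),
       f.getD (f.length - 1 - a0) 0 + (b0 : ℤ))))).flatten


/-- The `i`-th Drinfeld polynomial of a multiset of integral segments: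
`Q_i(x) = ∏_{b : |s_b| ≥ i} (1 − q^{2(j_b + 1 − i)} x)`. -/
noncomputable def drinfeld (q : ℂ) (s : Multiset Seg) (i : ℕ) : Polynomial ℂ :=
  ((s.filter (fun p => (i : ℤ) ≤ segLen p)).map
    (fun p => 1 - Polynomial.C (q ^ (2 * (p.2 + 1 - (i : ℤ)))) * Polynomial.X)).prod

/-- The column segments of the skew shape `λ/ν`: one segment
`(j − λ′_j, j − ν′_j − 1)` for each column `j` with `λ′_j > ν′_j`. -/
def skewSegList (lam nu : List ℕ) : List Seg :=
  ((List.range lam.headI).filter (fun j0 => conjCount nu (j0 + 1) < conjCount lam (j0 + 1))).map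
    (fun (j0 : ℕ) => ((j0 : ℤ) + 1 - (conjCount lam (j0 + 1) : ℤ),
      (j0 : ℤ) - (conjCount nu (j0 + 1) : ℤ)))

/-- A cell of the Young diagram of `λ` (1-based coordinates). -/
def IsYCell (lam : List ℕ) (a b : ℕ) : Prop := 1 ≤ a ∧ 1 ≤ b ∧ b ≤ part lam a

/-- A cell of the skew shape `λ/ν` (1-based coordinates). -/
def IsSkewCell (lam nu : List ℕ) (a b : ℕ) : Prop := 1 ≤ a ∧ part nu a < b ∧ b ≤ part lam a

instance (lam nu : List ℕ) (a b : ℕ) : Decidable (IsSkewCell lam nu a b) := by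
  unfold IsSkewCell; infer_instance

/-- A semistandard skew tableau of shape `λ/ν`, encoded as a function on 1-based coordinates
vanishing outside the shape, with positive entries weakly increasing along rows and strictly
increasing down columns. -/
def IsSSSkewTableau (lam nu : List ℕ) (T : ℕ → ℕ → ℕ) : Prop :=
  (∀ a b, ¬ IsSkewCell lam nu a b → T a b = 0) ∧
  (∀ a b, IsSkewCell lam nu a b → 1 ≤ T a b) ∧
  (∀ a b, IsSkewCell lam nu a b → IsSkewCell lam nu a (b + 1) → T a b ≤ T a (b + 1)) ∧
  (∀ a b, IsSkewCell lam nu a b → IsSkewCell lam nu (a + 1) b → T a b < T (a + 1) b)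

/-- Number of cells of `λ/ν` where `T` takes the value `i`. -/
def entryCount (lam nu : List ℕ) (T : ℕ → ℕ → ℕ) (i : ℕ) : ℕ :=
  ((Finset.range (lam.length + 1) ×ˢ Finset.range (lam.headI + 1)).filter
    (fun ab => IsSkewCell lam nu ab.1 ab.2 ∧ T ab.1 ab.2 = i)).card

/-- The reverse reading word of a skew tableau: each row right to left, rows top to bottom. -/
def rword (lam nu : List ℕ) (T : ℕ → ℕ → ℕ) : List ℕ :=
  ((List.range lam.length).map (fun a0 =>
    (List.range (part lam (a0 + 1) - part nu (a0 + 1))).map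
      (fun k => T (a0 + 1) (part lam (a0 + 1) - k)))).flatten

/-- A lattice word: in every prefix, `i` occurs at least as often as `i + 1`, for all `i ≥ 1`. -/
def IsLatticeWord (L : List ℕ) : Prop :=
  ∀ n i, 1 ≤ i → (L.take n).count (i + 1) ≤ (L.take n).count i

/-- `ρ_i = #{j : λ′_j − ν′_j ≥ i}`. -/
def rhoVal (lam nu : List ℕ) (i : ℕ) : ℕ :=
  ((Finset.range lam.headI).filter
    (fun j0 => i + conjCount nu (j0 + 1) ≤ conjCount lam (j0 + 1))).card

/-- `t^λ(a,b) = λ_1 + ⋯ + λ_{a−1} + b`: the row-by-row enumeration of the cells of `λ`. -/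
def rowIdx (lam : List ℕ) (a b : ℕ) : ℕ := (lam.take (a - 1)).sum + b

/-- `t_λ(a,b) = λ′_1 + ⋯ + λ′_{b−1} + a`: the column-by-column enumeration of the cells of `λ`. -/
def colIdx (lam : List ℕ) (a b : ℕ) : ℕ := ((conjList lam).take (b - 1)).sum + a

/-- A cell of the Young diagram of a multipartition: component `k`, row `a`, column `b`. -/
def IsMCell (lam : List (List ℕ)) (k a b : ℕ) : Prop :=
  1 ≤ k ∧ k ≤ lam.length ∧ IsYCell (lam.getD (k - 1) []) a b

/-- `t^{λ̲}`: row-by-row enumeration, components in order `1, …, m`. -/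
def mRowIdx (lam : List (List ℕ)) (k a b : ℕ) : ℕ :=
  ((lam.take (k - 1)).map List.sum).sum + rowIdx (lam.getD (k - 1) []) a b

/-- `t_{λ̲}`: column-by-column enumeration, components in order `m, …, 1`. -/
def mColIdx (lam : List (List ℕ)) (k a b : ℕ) : ℕ :=
  ((lam.drop k).map List.sum).sum + colIdx (lam.getD (k - 1) []) a b

/-!
Inside a block the upper endpoints go up by one and the lower endpoints strictly increase, so
the segment lengths weakly decrease: each block gives a partition. At the junction of two
consecutive blocks `b`, `c`, standardness of `w` gives `j_last(b) ≤ j_first(c)`, i.e. the gap of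
`f` between them is at least `ℓ(b) - 1`. Hence in the Kleshchev inequality only the last part of
`b` can face a part of `c` (the first one), and only when both segments end at the same `j`;
standardness then makes the segment of `c` the longer one.
-/

def BlockStep (p q : Seg) : Prop := q.2 = p.2 + 1 ∧ p.1 < q.1

def StdStep (p q : Seg) : Prop := p.2 ≤ q.2 ∧ (p.2 = q.2 → q.1 ≤ p.1)

def blockParts (b : List Seg) : List ℕ := b.map fun s => (segLen s).toNat

theorem isChain_cons_take_chainLen (p : Seg) (l : List Seg) :
    (p :: l.take (chainLen p l)).IsChain BlockStep := by
  induction l generalizing p with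
  | nil => simp
  | cons q rest ih =>
    by_cases h : q.2 = p.2 + 1 ∧ p.1 < q.1
    · rw [chainLen, if_pos h, List.take_succ_cons]
      exact List.IsChain.cons_cons h (ih q)
    · rw [chainLen, if_neg h]
      simp

theorem flatten_blocks (w : List Seg) : (blocks w).flatten = w := by
  induction w using blocks.induct with
  | case1 => simp [blocks]
  | case2 p rest ih => rw [blocks, List.flatten_cons, ih]; simp

theorem nil_not_mem_blocks (w : List Seg) : [] ∉ blocks w := by
  induction w using blocks.induct with
  | case1 => simp [blocks]
  | case2 p rest ih => rw [blocks]; simpa using ih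

theorem isChain_of_mem_blocks {w b : List Seg} (hb : b ∈ blocks w) : b.IsChain BlockStep := by
  induction w using blocks.induct with
  | case1 => simp [blocks] at hb
  | case2 p rest ih =>
    rw [blocks, List.mem_cons] at hb
    rcases hb with rfl | hb
    · exact isChain_cons_take_chainLen p rest
    · exact ih hb

theorem isChain_blocks_of_isChain {w : List Seg} (hw : w.IsChain StdStep)
    {R : List Seg → List Seg → Prop}
    (hR : ∀ b c, b ≠ [] → c ≠ [] → b.IsChain BlockStep →
      (∀ x ∈ b.getLast?, ∀ y ∈ c.head?, StdStep x y) → R b c) :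
    (blocks w).IsChain R := by
  rw [← flatten_blocks w, List.isChain_flatten (nil_not_mem_blocks w)] at hw
  refine (List.IsChain.iff_mem.mp hw.2).imp fun b c ⟨hb, hc, hbc⟩ => hR b c ?_ ?_ ?_ hbc
  · exact fun h => nil_not_mem_blocks w (h ▸ hb)
  · exact fun h => nil_not_mem_blocks w (h ▸ hc)
  · exact isChain_of_mem_blocks hb

theorem isPartition_blockParts {b : List Seg} (hb : b.IsChain BlockStep)
    (hproper : ∀ s ∈ b, s.1 ≤ s.2) : IsPartition (blockParts b) := by
  refine ⟨List.IsChain.pairwise ?_, ?_⟩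
  · refine List.isChain_map _ |>.mpr <| hb.imp fun p q ⟨hj, hi⟩ => ?_
    simp only [segLen, ge_iff_le]
    omega
  · simp only [blockParts, List.mem_map, forall_exists_index, and_imp, forall_apply_eq_imp_iff₂]
    intro s hs
    have := hproper s hs
    simp only [segLen]
    omega

theorem natCast_sum_blockParts {b : List Seg} (hproper : ∀ s ∈ b, s.1 ≤ s.2) :
    ((blockParts b).sum : ℤ) = (b.map segLen).sum := by
  rw [blockParts, Nat.cast_list_sum, List.map_map]
  refine congrArg List.sum (List.map_congr_left fun s hs => ?_)
  have := hproper s hs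
  simp only [Function.comp_apply, segLen]
  omega

theorem isPartition_of_mem_gammaOf {w : List Seg} (hproper : ∀ s ∈ w, s.1 ≤ s.2) :
    ∀ p ∈ gammaOf w, IsPartition p ∧ p ≠ [] := by
  simp only [gammaOf, List.mem_map, forall_exists_index, and_imp, forall_apply_eq_imp_iff₂]
  intro b hb
  refine ⟨isPartition_blockParts (isChain_of_mem_blocks hb) fun s hs => hproper s ?_, ?_⟩
  · exact flatten_blocks w ▸ List.mem_flatten_of_mem hb hs
  · rw [Ne, List.map_eq_nil_iff]
    rintro rfl
    exact nil_not_mem_blocks w hb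

theorem natCast_sum_gammaOf {w : List Seg} (hproper : ∀ s ∈ w, s.1 ≤ s.2) :
    ((((gammaOf w).map List.sum).sum : ℕ) : ℤ) = (w.map segLen).sum := by
  have hflat : ((gammaOf w).map List.sum).sum = (blockParts w).sum := by
    conv_rhs => rw [← flatten_blocks w, blockParts, List.map_flatten, List.sum_flatten]
    rfl
  rw [hflat, natCast_sum_blockParts hproper]

theorem snd_eq_of_mem_getLast? {b : List Seg} (hb : b.IsChain BlockStep) {x : Seg}
    (hx : x ∈ b.getLast?) : x.2 = b.headI.2 + (b.length - 1) := by
  induction b with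
  | nil => simp at hx
  | cons p rest ih =>
    cases rest with
    | nil => simp_all
    | cons q rest =>
      rw [List.isChain_cons_cons] at hb
      rw [List.getLast?_cons_cons] at hx
      have := ih hb.2 hx
      simp only [List.headI_cons, List.length_cons, Nat.cast_add, Nat.cast_one] at this ⊢
      linarith [hb.1.1]

theorem headI_snd_le {b c : List Seg} (hb : b.IsChain BlockStep) (hb0 : b ≠ []) (hc : c ≠ [])
    (hbc : ∀ x ∈ b.getLast?, ∀ y ∈ c.head?, StdStep x y) : b.headI.2 ≤ c.headI.2 := by
  obtain ⟨y, c', rfl⟩ := List.exists_cons_of_ne_nil hc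
  have hx : b.getLast hb0 ∈ b.getLast? := by simp [List.getLast?_eq_some_getLast hb0]
  have htop := snd_eq_of_mem_getLast? hb hx
  have hlen : 1 ≤ b.length := List.length_pos_iff.mpr hb0
  have := (hbc _ hx y (by simp)).1
  simp only [List.headI_cons]
  omega

theorem part_blockParts_le {b c : List Seg} (hb : b.IsChain BlockStep) (hc : c ≠ [])
    (hbc : ∀ x ∈ b.getLast?, ∀ y ∈ c.head?, StdStep x y) {j : ℕ} (hj : 1 ≤ j) :
    part (blockParts b) (j + (c.headI.2 - b.headI.2).toNat) ≤ part (blockParts c) j := by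
  obtain ⟨b', x, rfl⟩ | rfl := (List.eq_nil_or_concat' b).symm
  · obtain ⟨y, c', rfl⟩ := List.exists_cons_of_ne_nil hc
    have hx : x ∈ (b' ++ [x]).getLast? := by simp
    have hxy := hbc x hx y (by simp)
    have htop := snd_eq_of_mem_getLast? hb hx
    simp only [List.length_append, List.length_singleton, Nat.cast_add, Nat.cast_one,
      add_sub_cancel_right] at htop
    have hstep := hxy.1
    rw [List.headI_cons, part]
    set D := (y.2 - (b' ++ [x]).headI.2).toNat
    rcases Nat.lt_or_ge b'.length (j + D - 1) with h | h
    · rw [List.getD_eq_default _ _ (by simpa [blockParts] using h)]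
      exact Nat.zero_le _
    · obtain rfl : j = 1 := by omega
      have hyx : y.1 ≤ x.1 := hxy.2 (by omega)
      rw [show 1 + D - 1 = b'.length by omega, blockParts, List.map_append,
        List.getD_append_right _ _ _ _ (by simp), List.length_map, Nat.sub_self]
      simp only [List.map_cons, List.getD_cons_zero, part, blockParts, Nat.sub_self, segLen]
      omega
  · simp [part, blockParts]

theorem isKleshchev_of_isChain {L : List (ℤ × List ℕ)}
    (hL : L.IsChain fun x y => ∀ j, 1 ≤ j → part x.2 (j + (x.1 - y.1).toNat) ≤ part y.2 j) :
    IsKleshchev (L.map Prod.fst) (L.map Prod.snd) := by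
  intro k j hk hkL hj
  obtain ⟨i, rfl⟩ : ∃ i, k = i + 1 := ⟨k - 1, by omega⟩
  have hi : i + 1 < L.length := by simp at hkL; omega
  have := hL.getElem i hi j hj
  simpa [fpart, mpart, List.getD_eq_getElem, hi, Nat.lt_of_succ_lt hi] using this

/-- For a standard word `w` of total length `r`, with `γ̲_w` and `f_w` from
the block decomposition: (a) every component of `γ̲_w` is a nonempty partition and `γ̲_w` is a
(sincere) multipartition of `r`; (b) `f_w` is weakly decreasing; (c) `γ̲_w` is a Kleshchev
multipartition relative to `f_w* = (−f_m, …, −f_1)`. -/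
theorem standard_word_gives_kleshchev (r : ℕ) (w : List Seg) (hw : IsStandardWord r w) :
    (∀ p ∈ gammaOf w, IsPartition p ∧ p ≠ []) ∧
    IsMultipartition r (gammaOf w) ∧
    (fOf w).Pairwise (· ≥ ·) ∧
    IsKleshchev (fstar (fOf w)) (gammaOf w) := by
  obtain ⟨-, hproper, hstd, hsum⟩ := hw
  have hpart := isPartition_of_mem_gammaOf hproper
  have hhead : ((blocks w).map fun b => b.headI.2).IsChain (· ≤ ·) :=
    List.isChain_map _ |>.mpr <| isChain_blocks_of_isChain hstd fun _ _ hb0 hc hb hbc =>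
      headI_snd_le hb hb0 hc hbc
  have hkl : ((blocks w).map fun b => (-b.headI.2, blockParts b)).IsChain
      fun x y => ∀ j, 1 ≤ j → part x.2 (j + (x.1 - y.1).toNat) ≤ part y.2 j :=
    List.isChain_map _ |>.mpr <| isChain_blocks_of_isChain hstd fun _ _ _ hc hb hbc j hj => by
      simpa only [neg_sub_neg] using part_blockParts_le hb hc hbc hj
  refine ⟨hpart, ⟨fun p hp => (hpart p hp).1, ?_⟩, ?_, ?_⟩
  · exact_mod_cast (natCast_sum_gammaOf hproper).trans hsum
  · simpa [fOf, List.pairwise_reverse] using hhead.pairwise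
  · convert isKleshchev_of_isChain hkl using 1 <;>
      simp [fstar, fOf, gammaOf, blockParts, List.map_reverse, Function.comp_def]
end

section
/- Let ν ⊆ λ be partitions and define ρ = (ρ_1, ρ_2, …) by ρ_i = #{j ≥ 1 : λ′_j − ν′_j ≥ i}. Then ρ is a partition of |λ| − |ν|, and the Littlewood–Richardson coefficient c^λ_{νρ} equals 1; that is, there is exactly one semistandard skew tableau of shape λ/ν and content ρ whose reverse reading word is a lattice word. -/
/-!
Fill every column `b` of `λ/ν` with `1, 2, …, λ′_b − ν′_b` from the top. This tableau has
content `ρ` by construction, and its reverse reading word is a lattice word because every entry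
`i + 1` sits directly below an entry `i`. Conversely, column strictness forces every semistandard
tableau of shape `λ/ν` to dominate it cellwise; one of content `ρ` has the same entry sum
`∑ i ρ_i`, hence coincides with it. Counting the cells of `λ/ν` column by column gives
`|ρ| = |λ| − |ν|`.
-/

section Conjugate

variable {p : List ℕ}

lemma part_one (p : List ℕ) : part p 1 = p.headI := by
  cases p <;> rfl

lemma part_le_of_forall_le {M : ℕ} (h : ∀ x ∈ p, x ≤ M) (a : ℕ) : part p a ≤ M := by
  unfold part
  by_cases ha : a - 1 < p.length
  · rw [List.getD_eq_getElem _ _ ha]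
    exact h _ (List.getElem_mem ha)
  · rw [List.getD_eq_default _ _ (by omega)]
    exact Nat.zero_le M

lemma le_headI_of_mem (hp : p.Pairwise (· ≥ ·)) {x : ℕ} (hx : x ∈ p) : x ≤ p.headI := by
  cases p with
  | nil => simp at hx
  | cons y t =>
    rcases List.mem_cons.mp hx with rfl | h
    · exact le_rfl
    · exact (List.pairwise_cons.mp hp).1 x h

lemma part_le_headI (hp : p.Pairwise (· ≥ ·)) (a : ℕ) : part p a ≤ p.headI :=
  part_le_of_forall_le (fun _ => le_headI_of_mem hp) a

lemma conjCount_le_length (p : List ℕ) (j : ℕ) : conjCount p j ≤ p.length :=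
  List.length_filter_le _ _

lemma conjCount_antitone (p : List ℕ) : Antitone (conjCount p) := fun j j' h =>
  (List.monotone_filter_right p fun x hx => by simp only [decide_eq_true_eq] at hx ⊢; omega).length_le

lemma conjCount_cons (x : ℕ) (t : List ℕ) (j : ℕ) :
    conjCount (x :: t) j = conjCount t j + if j ≤ x then 1 else 0 := by
  by_cases h : j ≤ x <;> simp [conjCount, h]

lemma conjCount_eq_zero_of_forall_lt {j : ℕ} (h : ∀ x ∈ p, x < j) : conjCount p j = 0 := by
  simpa [conjCount, List.filter_eq_nil_iff] using h

lemma le_part_iff_le_conjCount (hp : p.Pairwise (· ≥ ·)) {a j : ℕ} (ha : 1 ≤ a) (hj : 1 ≤ j) :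
    j ≤ part p a ↔ a ≤ conjCount p j := by
  induction p generalizing a with
  | nil => change j ≤ 0 ↔ a ≤ 0; omega
  | cons x t ih =>
    obtain ⟨hxt, ht⟩ := List.pairwise_cons.mp hp
    rw [conjCount_cons]
    by_cases hjx : j ≤ x
    · obtain rfl | ⟨a, rfl⟩ : a = 1 ∨ ∃ a', a = a' + 2 := by
        rcases a with _ | _ | a <;> simp_all
      · simp [part, hjx]
      · rw [show part (x :: t) (a + 2) = part t (a + 1) from rfl, ih ht (by omega), if_pos hjx]
        omega
    · have h0 := conjCount_eq_zero_of_forall_lt fun y hy => (hxt y hy).trans_lt (not_le.mp hjx)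
      have hle : part (x :: t) a ≤ x := part_le_of_forall_le (fun y hy => by
        rcases List.mem_cons.mp hy with rfl | h
        exacts [le_rfl, hxt y h]) a
      rw [h0, if_neg hjx]
      omega

lemma conjCount_le_conjCount_of_part_le {lam nu : List ℕ} (hlam : lam.Pairwise (· ≥ ·))
    (hnu : nu.Pairwise (· ≥ ·)) (hsub : ∀ k, part nu k ≤ part lam k) {j : ℕ} (hj : 1 ≤ j) :
    conjCount nu j ≤ conjCount lam j := by
  rcases Nat.eq_zero_or_pos (conjCount nu j) with h | h
  · omega
  · rw [← le_part_iff_le_conjCount hlam h hj]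
    exact ((le_part_iff_le_conjCount hnu h hj).mpr le_rfl).trans (hsub _)

lemma sum_conjCount {M : ℕ} (hM : ∀ x ∈ p, x ≤ M) :
    ∑ j ∈ Finset.range M, conjCount p (j + 1) = p.sum := by
  induction p with
  | nil => simp [conjCount]
  | cons x t ih =>
    have hcol : ∑ j ∈ Finset.range M, (if j + 1 ≤ x then 1 else 0) = x := by
      rw [Finset.sum_boole, Nat.cast_id,
        show (Finset.range M).filter (· + 1 ≤ x) = Finset.range x by
          ext k; simp only [Finset.mem_filter, Finset.mem_range]
          have := hM x List.mem_cons_self; omega,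
        Finset.card_range]
    simp only [conjCount_cons, Finset.sum_add_distrib, hcol, List.sum_cons,
      ih fun y hy => hM y (List.mem_cons_of_mem x hy)]
    omega

end Conjugate

section SkewShape

variable {lam nu : List ℕ}

lemma isSkewCell_iff (hlam : lam.Pairwise (· ≥ ·)) (hnu : nu.Pairwise (· ≥ ·)) {a b : ℕ} :
    IsSkewCell lam nu a b ↔ 1 ≤ b ∧ conjCount nu b < a ∧ a ≤ conjCount lam b := by
  constructor
  · rintro ⟨ha, hnb, hlb⟩
    have hb : 1 ≤ b := by omega
    refine ⟨hb, ?_, (le_part_iff_le_conjCount hlam ha hb).mp hlb⟩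
    by_contra h
    have := (le_part_iff_le_conjCount hnu ha hb).mpr (not_lt.mp h)
    omega
  · rintro ⟨hb, hnb, hlb⟩
    have ha : 1 ≤ a := by omega
    refine ⟨ha, ?_, (le_part_iff_le_conjCount hlam ha hb).mpr hlb⟩
    by_contra h
    have := (le_part_iff_le_conjCount hnu ha hb).mp (not_lt.mp h)
    omega

def skewCells (lam nu : List ℕ) : Finset (ℕ × ℕ) :=
  (Finset.range (lam.length + 1) ×ˢ Finset.range (lam.headI + 1)).filter
    fun c => IsSkewCell lam nu c.1 c.2

lemma mem_skewCells (hlam : lam.Pairwise (· ≥ ·)) {a b : ℕ} :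
    (a, b) ∈ skewCells lam nu ↔ IsSkewCell lam nu a b := by
  refine ⟨fun h => (Finset.mem_filter.mp h).2, fun h => Finset.mem_filter.mpr ⟨?_, h⟩⟩
  obtain ⟨ha, hnb, hlb⟩ := h
  have hrow : a - 1 < lam.length := by
    by_contra hc
    simp only [part, List.getD_eq_default _ _ (not_lt.mp hc)] at hlb
    omega
  have := part_le_headI hlam a
  simp only [Finset.mem_product, Finset.mem_range]
  omega

lemma mem_skewCells_iff_column (hlam : lam.Pairwise (· ≥ ·)) (hnu : nu.Pairwise (· ≥ ·))
    {a b : ℕ} : (a, b) ∈ skewCells lam nu ↔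
      1 ≤ b ∧ b ≤ lam.headI ∧ conjCount nu b < a ∧ a ≤ conjCount lam b := by
  rw [mem_skewCells hlam, isSkewCell_iff hlam hnu]
  refine ⟨fun ⟨hb, hnb, hlb⟩ => ⟨hb, ?_, hnb, hlb⟩, fun ⟨hb, _, hnb, hlb⟩ => ⟨hb, hnb, hlb⟩⟩
  have := part_le_headI hlam a
  have := (le_part_iff_le_conjCount hlam (by omega) hb).mpr hlb
  omega

lemma entryCount_eq_card (T : ℕ → ℕ → ℕ) (i : ℕ) :
    entryCount lam nu T i = ((skewCells lam nu).filter fun c => T c.1 c.2 = i).card := by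
  rw [skewCells, Finset.filter_filter]
  rfl

def readingRow (lam nu : List ℕ) (T : ℕ → ℕ → ℕ) (a : ℕ) : List ℕ :=
  (List.range (part lam a - part nu a)).map fun k => T a (part lam a - k)

def readingRows (lam nu : List ℕ) (T : ℕ → ℕ → ℕ) : List (List ℕ) :=
  (List.range lam.length).map fun a0 => readingRow lam nu T (a0 + 1)

lemma rword_eq_flatten (T : ℕ → ℕ → ℕ) : rword lam nu T = (readingRows lam nu T).flatten := rfl

lemma count_readingRow (hlam : lam.Pairwise (· ≥ ·)) (T : ℕ → ℕ → ℕ) {a : ℕ} (ha : 1 ≤ a)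
    (v : ℕ) : (readingRow lam nu T a).count v
      = ((skewCells lam nu).filter fun c => c.1 = a ∧ T c.1 c.2 = v).card := by
  have hcount : (readingRow lam nu T a).count v
      = ((Finset.range (part lam a - part nu a)).filter fun k => T a (part lam a - k) = v).card := by
    simp [readingRow, List.count_eq_countP, List.countP_eq_length_filter, List.filter_map,
      Finset.card_def, Finset.filter_val, Finset.range_val, Multiset.range, Function.comp_def,
      Bool.beq_eq_decide_eq]
  rw [hcount]
  refine Finset.card_nbij' (fun k => (a, part lam a - k)) (fun c => part lam a - c.2) ?_ ?_ ?_ ?_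
  · intro k hk
    simp only [Finset.mem_coe, Finset.mem_filter, Finset.mem_range] at hk ⊢
    exact ⟨(mem_skewCells hlam).mpr ⟨ha, by omega, by omega⟩, trivial, hk.2⟩
  · rintro ⟨a', b⟩ hc
    simp only [Finset.mem_coe, Finset.mem_filter, Finset.mem_range, mem_skewCells hlam] at hc ⊢
    obtain ⟨⟨-, hnb, hlb⟩, rfl, hv⟩ := hc
    refine ⟨by omega, ?_⟩
    rwa [Nat.sub_sub_self hlb]
  · intro k hk
    simp only [Finset.mem_coe, Finset.mem_filter, Finset.mem_range] at hk
    simp only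
    omega
  · rintro ⟨a', b⟩ hc
    simp only [Finset.mem_coe, Finset.mem_filter, mem_skewCells hlam] at hc
    obtain ⟨⟨-, -, hlb⟩, rfl, -⟩ := hc
    simp only [Nat.sub_sub_self hlb]

lemma count_take_readingRows (hlam : lam.Pairwise (· ≥ ·)) (T : ℕ → ℕ → ℕ) (m v : ℕ) :
    (((readingRows lam nu T).take m).flatten).count v
      = ((skewCells lam nu).filter fun c => c.1 ≤ m ∧ T c.1 c.2 = v).card := by
  have hrows : (((readingRows lam nu T).take m).flatten).count v
      = ∑ a0 ∈ Finset.range (min m lam.length), (readingRow lam nu T (a0 + 1)).count v := by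
    simp [readingRows, ← List.map_take, List.take_range, List.count_flatten,
      Finset.sum_eq_multiset_sum, Finset.range_val, Multiset.range, Function.comp_def]
  have hrow_le : ∀ c ∈ skewCells lam nu, 1 ≤ c.1 ∧ c.1 ≤ lam.length := fun c hc => by
    simp only [skewCells, Finset.mem_filter, Finset.mem_product, Finset.mem_range] at hc
    exact ⟨hc.2.1, by omega⟩
  rw [hrows, Finset.card_eq_sum_card_fiberwise (f := fun c => c.1 - 1) (t := Finset.range _)]
  · refine Finset.sum_congr rfl fun a0 ha0 => ?_
    rw [count_readingRow hlam T (Nat.le_add_left 1 a0), Finset.filter_filter]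
    refine congrArg Finset.card (Finset.filter_congr fun c hc => ?_)
    have := hrow_le c hc
    simp only [Finset.mem_range] at ha0
    omega
  · intro c hc
    simp only [Finset.mem_coe, Finset.mem_filter, Finset.mem_range] at hc ⊢
    have := hrow_le c hc.1
    omega

end SkewShape

lemma List.exists_take_flatten_prefix {α : Type*} (rows : List (List α)) (n : ℕ) :
    ∃ a, (rows.take a).flatten <+: rows.flatten.take n ∧
      rows.flatten.take n <+: (rows.take (a + 1)).flatten := by
  induction rows generalizing n with
  | nil => exact ⟨0, by simp⟩
  | cons r rest ih =>
    by_cases h : n ≤ r.length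
    · refine ⟨0, List.nil_prefix, ?_⟩
      simpa [List.take_append_of_le_length h] using List.take_prefix n r
    · obtain ⟨a, h₁, h₂⟩ := ih (n - r.length)
      refine ⟨a + 1, ?_, ?_⟩ <;>
        simpa [List.take_append, List.take_of_length_le (not_le.mp h).le,
          List.prefix_append_right_inj]

lemma isLatticeWord_flatten (rows : List (List ℕ))
    (h : ∀ a i, 1 ≤ i →
      ((rows.take (a + 1)).flatten).count (i + 1) ≤ ((rows.take a).flatten).count i) :
    IsLatticeWord rows.flatten := by
  intro n i hi
  obtain ⟨a, h₁, h₂⟩ := rows.exists_take_flatten_prefix n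
  calc (rows.flatten.take n).count (i + 1)
      ≤ ((rows.take (a + 1)).flatten).count (i + 1) := h₂.sublist.count_le _
    _ ≤ ((rows.take a).flatten).count i := h a i hi
    _ ≤ (rows.flatten.take n).count i := h₁.sublist.count_le _

def canonicalTableau (lam nu : List ℕ) : ℕ → ℕ → ℕ :=
  fun a b => if IsSkewCell lam nu a b then a - conjCount nu b else 0

section CanonicalTableau

variable {lam nu : List ℕ}

lemma canonicalTableau_isSSSkewTableau (hlam : lam.Pairwise (· ≥ ·)) (hnu : nu.Pairwise (· ≥ ·)) : IsSSSkewTableau lam nu (canonicalTableau lam nu) := by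
  refine ⟨fun a b h => if_neg h, fun a b h => ?_, fun a b h h' => ?_, fun a b h h' => ?_⟩
  · have := (isSkewCell_iff hlam hnu).mp h
    simp only [canonicalTableau, if_pos h]
    omega
  · have := conjCount_antitone nu (Nat.le_add_right b 1)
    simp only [canonicalTableau, if_pos h, if_pos h']
    omega
  · have := (isSkewCell_iff hlam hnu).mp h
    simp only [canonicalTableau, if_pos h, if_pos h']
    omega

lemma canonicalTableau_of_mem_skewCells (hlam : lam.Pairwise (· ≥ ·)) {a b : ℕ}
    (hc : (a, b) ∈ skewCells lam nu) : canonicalTableau lam nu a b = a - conjCount nu b :=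
  if_pos ((mem_skewCells hlam).mp hc)

lemma entryCount_canonicalTableau (hlam : lam.Pairwise (· ≥ ·)) (hnu : nu.Pairwise (· ≥ ·)) {i : ℕ} (hi : 1 ≤ i) :
    entryCount lam nu (canonicalTableau lam nu) i = rhoVal lam nu i := by
  rw [entryCount_eq_card, rhoVal]
  refine Finset.card_nbij' (fun c => c.2 - 1) (fun j0 => (conjCount nu (j0 + 1) + i, j0 + 1))
    ?_ ?_ ?_ ?_
  · rintro ⟨a, b⟩ hc
    simp only [Finset.mem_coe, Finset.mem_filter, Finset.mem_range] at hc ⊢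
    obtain ⟨hcell, hv⟩ := hc
    rw [canonicalTableau_of_mem_skewCells hlam hcell] at hv
    rw [mem_skewCells_iff_column hlam hnu] at hcell
    rw [Nat.sub_add_cancel hcell.1]
    omega
  · intro j0 hj0
    simp only [Finset.mem_coe, Finset.mem_filter, Finset.mem_range] at hj0 ⊢
    have hcell : (conjCount nu (j0 + 1) + i, j0 + 1) ∈ skewCells lam nu :=
      (mem_skewCells_iff_column hlam hnu).mpr ⟨by omega, by omega, by omega, by omega⟩
    rw [canonicalTableau_of_mem_skewCells hlam hcell]
    exact ⟨hcell, by omega⟩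
  · rintro ⟨a, b⟩ hc
    simp only [Finset.mem_coe, Finset.mem_filter] at hc
    obtain ⟨hcell, hv⟩ := hc
    rw [canonicalTableau_of_mem_skewCells hlam hcell] at hv
    rw [mem_skewCells_iff_column hlam hnu] at hcell
    simp only [Nat.sub_add_cancel hcell.1, Prod.mk.injEq, and_true]
    omega
  · intro j0 _
    simp

lemma isLatticeWord_rword_canonicalTableau (hlam : lam.Pairwise (· ≥ ·))
    (hnu : nu.Pairwise (· ≥ ·)) :
    IsLatticeWord (rword lam nu (canonicalTableau lam nu)) := by
  rw [rword_eq_flatten]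
  refine isLatticeWord_flatten _ fun a i hi => ?_
  rw [count_take_readingRows hlam, count_take_readingRows hlam]
  -- moving each cell with entry `i + 1` one row up gives a cell with entry `i`
  refine Finset.card_le_card_of_injOn (fun c => (c.1 - 1, c.2)) ?_ ?_
  · rintro ⟨a', b⟩ hc
    simp only [Finset.mem_coe, Finset.mem_filter] at hc ⊢
    obtain ⟨hcell, ha', hv⟩ := hc
    rw [canonicalTableau_of_mem_skewCells hlam hcell] at hv
    rw [mem_skewCells_iff_column hlam hnu] at hcell
    have hup : (a' - 1, b) ∈ skewCells lam nu :=
      (mem_skewCells_iff_column hlam hnu).mpr ⟨hcell.1, hcell.2.1, by omega, by omega⟩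
    rw [canonicalTableau_of_mem_skewCells hlam hup]
    exact ⟨hup, by omega, by omega⟩
  · rintro ⟨a', b⟩ hc ⟨a'', b'⟩ hc' heq
    simp only [Finset.mem_coe, Finset.mem_filter, mem_skewCells_iff_column hlam hnu] at hc hc'
    simp only [Prod.mk.injEq] at heq ⊢
    omega

end CanonicalTableau

section Uniqueness

variable {lam nu : List ℕ} {T : ℕ → ℕ → ℕ}

lemma canonicalTableau_le (hlam : lam.Pairwise (· ≥ ·)) (hnu : nu.Pairwise (· ≥ ·))
    (hT : IsSSSkewTableau lam nu T) {a b : ℕ} (h : IsSkewCell lam nu a b) :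
    canonicalTableau lam nu a b ≤ T a b := by
  rw [canonicalTableau, if_pos h]
  induction a with
  | zero => omega
  | succ a ih =>
    have hcol := (isSkewCell_iff hlam hnu).mp h
    by_cases ha : conjCount nu b < a
    · have h' : IsSkewCell lam nu a b := (isSkewCell_iff hlam hnu).mpr ⟨hcol.1, ha, by omega⟩
      have := hT.2.2.2 a b h' h
      have := ih h'
      omega
    · have := hT.2.1 _ _ h
      omega

lemma le_length_of_entryCount_eq_rhoVal (hlam : lam.Pairwise (· ≥ ·))
    (hT : IsSSSkewTableau lam nu T) (hcnt : ∀ i, 1 ≤ i → entryCount lam nu T i = rhoVal lam nu i)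
    {c : ℕ × ℕ} (hc : c ∈ skewCells lam nu) : T c.1 c.2 ≤ lam.length := by
  have hpos : 0 < entryCount lam nu T (T c.1 c.2) := by
    rw [entryCount_eq_card]
    exact Finset.card_pos.mpr ⟨c, Finset.mem_filter.mpr ⟨hc, rfl⟩⟩
  rw [hcnt _ (hT.2.1 _ _ ((mem_skewCells hlam).mp hc))] at hpos
  obtain ⟨j0, hj0⟩ := Finset.card_pos.mp hpos
  have := conjCount_le_length lam (j0 + 1)
  simp only [Finset.mem_filter] at hj0
  omega

lemma sum_skewCells_eq_of_entryCount_eq_rhoVal (hlam : lam.Pairwise (· ≥ ·))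
    (hT : IsSSSkewTableau lam nu T) (hcnt : ∀ i, 1 ≤ i → entryCount lam nu T i = rhoVal lam nu i) :
    ∑ c ∈ skewCells lam nu, T c.1 c.2 = ∑ i ∈ Finset.range (lam.length + 1), i * rhoVal lam nu i := by
  rw [← Finset.sum_fiberwise_of_maps_to (t := Finset.range (lam.length + 1))
    (g := fun c => T c.1 c.2) fun c hc => Finset.mem_range_succ_iff.mpr
      (le_length_of_entryCount_eq_rhoVal hlam hT hcnt hc)]
  refine Finset.sum_congr rfl fun i _ => ?_
  rw [Finset.sum_congr rfl fun c hc => (Finset.mem_filter.mp hc).2, Finset.sum_const, smul_eq_mul,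
    ← entryCount_eq_card]
  rcases Nat.eq_zero_or_pos i with rfl | hi
  · simp
  · rw [hcnt i hi, mul_comm]

lemma eq_canonicalTableau (hlam : lam.Pairwise (· ≥ ·)) (hnu : nu.Pairwise (· ≥ ·))
    (hT : IsSSSkewTableau lam nu T) (hcnt : ∀ i, 1 ≤ i → entryCount lam nu T i = rhoVal lam nu i) :
    T = canonicalTableau lam nu := by
  have hle : ∀ c ∈ skewCells lam nu, canonicalTableau lam nu c.1 c.2 ≤ T c.1 c.2 :=
    fun c hc => canonicalTableau_le hlam hnu hT ((mem_skewCells hlam).mp hc)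
  have hsum : ∑ c ∈ skewCells lam nu, canonicalTableau lam nu c.1 c.2
      = ∑ c ∈ skewCells lam nu, T c.1 c.2 := by
    rw [sum_skewCells_eq_of_entryCount_eq_rhoVal hlam hT hcnt,
      sum_skewCells_eq_of_entryCount_eq_rhoVal hlam (canonicalTableau_isSSSkewTableau hlam hnu)
        fun i hi => entryCount_canonicalTableau hlam hnu hi]
  have heq := (Finset.sum_eq_sum_iff_of_le hle).mp hsum
  funext a b
  by_cases h : IsSkewCell lam nu a b
  · exact (heq (a, b) ((mem_skewCells hlam).mpr h)).symm
  · rw [hT.1 a b h, canonicalTableau, if_neg h]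

end Uniqueness

lemma rhoVal_succ_le (lam nu : List ℕ) (i : ℕ) : rhoVal lam nu (i + 1) ≤ rhoVal lam nu i :=
  Finset.card_le_card <| Finset.monotone_filter_right _ fun _ _ h => by omega

lemma sum_rhoVal_add_sum {lam nu : List ℕ} (hlam : lam.Pairwise (· ≥ ·))
    (hnu : nu.Pairwise (· ≥ ·)) (hsub : ∀ k, part nu k ≤ part lam k) :
    (∑ i ∈ Finset.range lam.length, rhoVal lam nu (i + 1)) + nu.sum = lam.sum := by
  have hcol : ∀ j0 ∈ Finset.range lam.headI,
      ∑ i ∈ Finset.range lam.length,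
        (if i + 1 + conjCount nu (j0 + 1) ≤ conjCount lam (j0 + 1) then 1 else 0)
      = conjCount lam (j0 + 1) - conjCount nu (j0 + 1) := fun j0 _ => by
    have := conjCount_le_length lam (j0 + 1)
    rw [Finset.sum_boole, Nat.cast_id,
      show (Finset.range lam.length).filter
          (fun i => i + 1 + conjCount nu (j0 + 1) ≤ conjCount lam (j0 + 1))
        = Finset.range (conjCount lam (j0 + 1) - conjCount nu (j0 + 1)) by
        ext k; simp only [Finset.mem_filter, Finset.mem_range]; omega,
      Finset.card_range]
  have hnu_le : ∀ x ∈ nu, x ≤ lam.headI := fun x hx => calc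
    x ≤ part nu 1 := part_one nu ▸ le_headI_of_mem hnu hx
    _ ≤ part lam 1 := hsub 1
    _ = lam.headI := part_one lam
  simp only [rhoVal, Finset.card_eq_sum_ones, Finset.sum_filter]
  rw [Finset.sum_comm, Finset.sum_congr rfl hcol, ← sum_conjCount hnu_le,
    ← sum_conjCount fun _ => le_headI_of_mem hlam, ← Finset.sum_add_distrib]
  refine Finset.sum_congr rfl fun j0 _ => ?_
  have := conjCount_le_conjCount_of_part_le hlam hnu hsub (Nat.le_add_left 1 j0)
  omega

/-- For partitions `ν ⊆ λ`, set `ρ_i = #{j : λ′_j − ν′_j ≥ i}`. Then `ρ` is a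
partition of `|λ| − |ν|`, and the Littlewood–Richardson coefficient `c^λ_{νρ}` equals `1`:
there is exactly one semistandard skew tableau of shape `λ/ν` and content `ρ` whose reverse
reading word is a lattice word. -/
theorem littlewood_richardson_rho_unique (lam nu : List ℕ)
    (hlam : IsPartition lam) (hnu : IsPartition nu) (hsub : ∀ k, part nu k ≤ part lam k) :
    (∀ i, 1 ≤ i → rhoVal lam nu (i + 1) ≤ rhoVal lam nu i) ∧
    (∑ i ∈ Finset.range lam.length, rhoVal lam nu (i + 1)) + nu.sum = lam.sum ∧
    (∃! T : ℕ → ℕ → ℕ, IsSSSkewTableau lam nu T ∧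
      (∀ i, 1 ≤ i → entryCount lam nu T i = rhoVal lam nu i) ∧
      IsLatticeWord (rword lam nu T)) := by
  refine ⟨fun i _ => rhoVal_succ_le lam nu i, sum_rhoVal_add_sum hlam.1 hnu.1 hsub,
    canonicalTableau lam nu, ⟨canonicalTableau_isSSSkewTableau hlam.1 hnu.1,
      fun i hi => entryCount_canonicalTableau hlam.1 hnu.1 hi,
      isLatticeWord_rword_canonicalTableau hlam.1 hnu.1⟩, ?_⟩
  rintro T ⟨hT, hcnt, -⟩
  exact eq_canonicalTableau hlam.1 hnu.1 hT hcnt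
end
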